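/- Let q : (G,𝒫) → (H,𝒬) be an (L,C,M)-quasi-isometry of group pairs with 𝒫 and 𝒬 non-empty. If (G,𝒫) is a σ-network for some σ ≥ 0, then there exists τ ≥ 0 such that (H,𝒬) is a τ-network. Here a group pair (G,𝒫) with 𝒫 non-empty is a τ-network if for any two cosets A, A' ∈ G/𝒫 there is a finite sequence A = L₁, L₂, …, L_n = A' of elements of G/𝒫 such that N_τ(L_i) ∩ N_τ(L_{i+1}) is an unbounded subset of (G, d_G) for all 1 ≤ i < n. -/

import Mathlib

/-!
Pull `B, B' ∈ H/𝒬` back to cosets `A, A' ∈ G/𝒫` whose images are `M`-Hausdorff close to them,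
join `A` to `A'` by a chain in `G/𝒫`, and push each coset of the chain forward to a coset of
`H/𝒬` within Hausdorff distance `M` of its image. The image of the unbounded set
`N_σ(A_i) ∩ N_σ(A_{i+1})` is unbounded by the lower quasi-isometry bound and, by the upper bound,
lies in the `(Lσ + C + M)`-neighborhoods of the two cosets chosen for `A_i` and `A_{i+1}`. Since
cosets are infinite, hence unbounded, each coset is linked to itself; so the chain may be taken
non-empty, and its pushforward can be chosen to start at `B` and end at `B'`.
-/

open scoped Pointwise ENNReal NNReal

namespace CIC

variable {G : Type*} [Group G] {H : Type*} [Group H]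

/-- Word length of `g` with respect to the generating set `S`: the least `n` such that `g`
is a product of `n` elements of `S ∪ S⁻¹`. -/
noncomputable def wordLength (S : Set G) (g : G) : ℕ :=
  sInf {n | ∃ l : List G, (∀ x ∈ l, x ∈ S ∨ x⁻¹ ∈ S) ∧ l.length = n ∧ l.prod = g}

/-- The word metric on `G` associated to the generating set `S`. -/
noncomputable def wdist (S : Set G) (g h : G) : ℕ := wordLength S (g⁻¹ * h)

/-- Closed `r`-neighborhood of `A` with respect to the word metric of `S`. -/
def nbhd (S : Set G) (r : ℝ) (A : Set G) : Set G :=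
  {x | ∃ a ∈ A, (wdist S a x : ℝ) ≤ r}

/-- Hausdorff distance between subsets of `G`, valued in `[0,∞]`: the infimum of those
`r ≥ 0` such that each set is contained in the closed `r`-neighborhood of the other,
the infimum of the empty set being `∞`. -/
noncomputable def hdist (S : Set G) (A B : Set G) : ℝ≥0∞ :=
  ⨅ (r : ℝ≥0) (_ : A ⊆ nbhd S (r : ℝ) B ∧ B ⊆ nbhd S (r : ℝ) A), (r : ℝ≥0∞)

/-- The conjugate subgroup `g P g⁻¹`. -/
def conj (g : G) (P : Subgroup G) : Subgroup G := P.map (MulAut.conj g).toMonoidHom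

/-- The set `G/𝒫` of all left cosets `gP` with `g ∈ G` and `P ∈ 𝒫`. -/
def cosets (Ps : Finset (Subgroup G)) : Set (Set G) :=
  {A | ∃ (g : G) (P : Subgroup G), P ∈ Ps ∧ A = g • (P : Set G)}

/-- A group pair `(G, 𝒫)`: `S` is a finite generating set of `G` and `𝒫` is a finite
collection of infinite subgroups of `G`. -/
structure IsGroupPair (S : Finset G) (Ps : Finset (Subgroup G)) : Prop where
  generates : Subgroup.closure (S : Set G) = ⊤
  infinite : ∀ P ∈ Ps, (P : Set G).Infinite

/-- An `(L,C,M)`-quasi-isometry of group pairs `q : (G,𝒫) → (H,𝒬)`. -/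
structure IsPairQI (S : Finset G) (T : Finset H)
    (Ps : Finset (Subgroup G)) (Qs : Finset (Subgroup H))
    (L C M : ℝ≥0) (q : G → H) : Prop where
  one_le : 1 ≤ L
  lower : ∀ a b : G, (wdist (S : Set G) a b : ℝ) / L - C ≤ (wdist (T : Set H) (q a) (q b) : ℝ)
  upper : ∀ a b : G, (wdist (T : Set H) (q a) (q b) : ℝ) ≤ L * (wdist (S : Set G) a b : ℝ) + C
  dense : ∀ y : H, ∃ x : G, (wdist (T : Set H) (q x) y : ℝ) ≤ C
  coset_fwd : ∀ A ∈ cosets Ps, ∃ B ∈ cosets Qs, hdist (T : Set H) (q '' A) B < (M : ℝ≥0∞)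
  coset_bwd : ∀ B ∈ cosets Qs, ∃ A ∈ cosets Ps, hdist (T : Set H) (q '' A) B < (M : ℝ≥0∞)

/-- A subset of `G` is unbounded: it has infinite diameter with respect to the word
metric. -/
def Unbounded (S : Set G) (A : Set G) : Prop :=
  ∀ D : ℝ, ∃ x ∈ A, ∃ y ∈ A, D ≤ (wdist S x y : ℝ)

/-- `(G,𝒫)` (with `𝒫` non-empty) is a `τ`-network: any two cosets `A, A' ∈ G/𝒫` are joined
by a finite chain of cosets whose consecutive `τ`-neighborhoods intersect in unbounded
sets. -/
def IsNetwork (S : Set G) (Ps : Finset (Subgroup G)) (τ : ℝ) : Prop :=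
  Ps.Nonempty ∧
  ∀ A ∈ cosets Ps, ∀ A' ∈ cosets Ps,
    ∃ (n : ℕ) (c : Fin (n + 1) → Set G),
      (∀ i, c i ∈ cosets Ps) ∧ c 0 = A ∧ c (Fin.last n) = A' ∧
      ∀ i : Fin n, Unbounded S (nbhd S τ (c i.castSucc) ∩ nbhd S τ (c i.succ))

section WordMetric

variable {S : Set G}

lemma exists_list_prod_eq (hS : Subgroup.closure S = ⊤) (g : G) :
    ∃ l : List G, (∀ x ∈ l, x ∈ S ∨ x⁻¹ ∈ S) ∧ l.prod = g := by
  have hg : g ∈ (Subgroup.closure S).toSubmonoid := hS ▸ Subgroup.mem_top g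
  rw [Subgroup.closure_toSubmonoid] at hg
  obtain ⟨l, hl, hprod⟩ := Submonoid.exists_list_of_mem_closure hg
  exact ⟨l, fun x hx => by simpa [Set.mem_inv] using hl x hx, hprod⟩

lemma wordLength_le_length {g : G} (l : List G) (hl : ∀ x ∈ l, x ∈ S ∨ x⁻¹ ∈ S)
    (hprod : l.prod = g) : wordLength S g ≤ l.length :=
  Nat.sInf_le ⟨l, hl, rfl, hprod⟩

lemma exists_list_length_eq_wordLength (hS : Subgroup.closure S = ⊤) (g : G) :
    ∃ l : List G, (∀ x ∈ l, x ∈ S ∨ x⁻¹ ∈ S) ∧ l.length = wordLength S g ∧ l.prod = g := by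
  obtain ⟨l, hl, hprod⟩ := exists_list_prod_eq hS g
  have hne : {n | ∃ l : List G, (∀ x ∈ l, x ∈ S ∨ x⁻¹ ∈ S) ∧ l.length = n ∧ l.prod = g}.Nonempty :=
    ⟨l.length, l, hl, rfl, hprod⟩
  exact Nat.sInf_mem hne

lemma wdist_self (a : G) : wdist S a a = 0 := by
  simpa [wdist] using wordLength_le_length (S := S) [] (by simp) rfl

lemma wdist_triangle (hS : Subgroup.closure S = ⊤) (a b c : G) :
    wdist S a c ≤ wdist S a b + wdist S b c := by
  obtain ⟨l₁, hl₁, hlen₁, hprod₁⟩ := exists_list_length_eq_wordLength hS (a⁻¹ * b)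
  obtain ⟨l₂, hl₂, hlen₂, hprod₂⟩ := exists_list_length_eq_wordLength hS (b⁻¹ * c)
  have h := wordLength_le_length (S := S) (g := a⁻¹ * c) (l₁ ++ l₂)
    (fun x hx => (List.mem_append.mp hx).elim (hl₁ x) (hl₂ x))
    (by rw [List.prod_append, hprod₁, hprod₂]; group)
  simpa [wdist, hlen₁, hlen₂] using h

lemma finite_setOf_wdist_le {S : Finset G} (hS : Subgroup.closure (S : Set G) = ⊤) (x : G)
    (n : ℕ) : {y : G | wdist (S : Set G) x y ≤ n}.Finite := by
  set s : Set G := (S : Set G) ∪ (S : Set G)⁻¹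
  have : Finite s := (S.finite_toSet.union S.finite_toSet.inv).to_subtype
  refine ((List.finite_length_le s n).image fun l => x * (l.map Subtype.val).prod).subset ?_
  intro y hy
  obtain ⟨l, hl, hlen, hprod⟩ := exists_list_length_eq_wordLength hS (x⁻¹ * y)
  refine ⟨l.attach.map fun z => ⟨z.1, by simpa [s, Set.mem_inv] using hl z.1 z.2⟩, ?_, ?_⟩
  · simpa using hlen.le.trans hy
  · simp [hprod]

lemma Unbounded.mono {A B : Set G} (hA : Unbounded S A) (h : A ⊆ B) : Unbounded S B := by
  intro D
  obtain ⟨x, hx, y, hy, hD⟩ := hA D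
  exact ⟨x, h hx, y, h hy, hD⟩

lemma unbounded_of_infinite {S : Finset G} (hS : Subgroup.closure (S : Set G) = ⊤) {A : Set G}
    (hA : A.Infinite) : Unbounded (S : Set G) A := by
  intro D
  obtain ⟨x, hx⟩ := hA.nonempty
  obtain ⟨y, hy, hfar⟩ := (hA.sdiff (finite_setOf_wdist_le hS x ⌈D⌉₊)).nonempty
  refine ⟨x, hx, y, hy, (Nat.le_ceil D).trans ?_⟩
  exact_mod_cast (lt_of_not_ge hfar).le

lemma subset_nbhd {r : ℝ} (hr : 0 ≤ r) (A : Set G) : A ⊆ nbhd S r A :=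
  fun a ha => ⟨a, ha, by simpa [wdist_self] using hr⟩

lemma subset_nbhd_of_hdist_lt {A B : Set G} {M : ℝ≥0} (h : hdist S A B < M) :
    A ⊆ nbhd S M B := by
  simp only [hdist, iInf_lt_iff] at h
  obtain ⟨r, ⟨hAB, -⟩, hrM⟩ := h
  have hr : (r : ℝ) ≤ M := by exact_mod_cast (ENNReal.coe_lt_coe.mp hrM).le
  intro x hx
  obtain ⟨b, hb, hbx⟩ := hAB hx
  exact ⟨b, hb, hbx.trans hr⟩

end WordMetric

lemma infinite_of_mem_cosets {Ps : Finset (Subgroup G)} (hPs : ∀ P ∈ Ps, (P : Set G).Infinite)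
    {A : Set G} (hA : A ∈ cosets Ps) : A.Infinite := by
  obtain ⟨g, P, hP, rfl⟩ := hA
  exact (hPs P hP).smul_set

section QuasiIsometry

variable {S : Set G} {T : Set H} {L C : ℝ≥0} {q : G → H}

lemma Unbounded.image_of_lower_bound (hL : 0 < L)
    (hlower : ∀ a b : G, (wdist S a b : ℝ) / L - C ≤ (wdist T (q a) (q b) : ℝ))
    {U : Set G} (hU : Unbounded S U) : Unbounded T (q '' U) := by
  intro D
  obtain ⟨x, hx, y, hy, hxy⟩ := hU (L * (D + C))
  refine ⟨q x, ⟨x, hx, rfl⟩, q y, ⟨y, hy, rfl⟩, ?_⟩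
  have : D + C ≤ (wdist S x y : ℝ) / L := by rwa [le_div_iff₀' (by exact_mod_cast hL)]
  linarith [hlower x y]

lemma image_nbhd_subset_nbhd (hT : Subgroup.closure T = ⊤)
    (hupper : ∀ a b : G, (wdist T (q a) (q b) : ℝ) ≤ L * (wdist S a b : ℝ) + C)
    {X : Set G} {B : Set H} {M σ : ℝ} (hX : q '' X ⊆ nbhd T M B) :
    q '' nbhd S σ X ⊆ nbhd T (L * σ + C + M) B := by
  rintro _ ⟨x, ⟨a, ha, hax⟩, rfl⟩
  obtain ⟨b, hb, hba⟩ := hX ⟨a, ha, rfl⟩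
  refine ⟨b, hb, ?_⟩
  have htri : (wdist T b (q x) : ℝ) ≤ wdist T b (q a) + wdist T (q a) (q x) := by
    exact_mod_cast wdist_triangle hT b (q a) (q x)
  nlinarith [hupper a x, L.coe_nonneg]

end QuasiIsometry

lemma _root_.Relation.TransGen.lift_along {α β : Type*} {r : α → α → Prop} {s : β → β → Prop}
    {c : α → β → Prop} (hc : ∀ x y, r x y → ∃ u, c x u)
    (hs : ∀ x y u v, r x y → c x u → c y v → s u v) {a a' : α} {u v : β}
    (h : Relation.TransGen r a a') (hu : c a u) (hv : c a' v) : Relation.TransGen s u v := by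
  induction h generalizing v with
  | single hxy => exact .single (hs _ _ _ _ hxy hu hv)
  | tail _ hxy ih =>
    obtain ⟨w, hw⟩ := hc _ _ hxy
    exact (ih hw).tail (hs _ _ _ _ hxy hw hv)

lemma reflTransGen_of_fin_chain {α : Type*} {r : α → α → Prop} :
    ∀ {n : ℕ} (c : Fin (n + 1) → α), (∀ i : Fin n, r (c i.castSucc) (c i.succ)) →
      Relation.ReflTransGen r (c 0) (c (Fin.last n))
  | 0, _, _ => .refl
  | n + 1, c, hc =>
    (reflTransGen_of_fin_chain (fun i => c i.castSucc) fun i => hc i.castSucc).tail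
      (hc (Fin.last n))

lemma exists_fin_chain_of_reflTransGen {α : Type*} {r : α → α → Prop} {a b : α}
    (h : Relation.ReflTransGen r a b) :
    ∃ (n : ℕ) (c : Fin (n + 1) → α), c 0 = a ∧ c (Fin.last n) = b ∧
      ∀ i : Fin n, r (c i.castSucc) (c i.succ) := by
  induction h with
  | refl => exact ⟨0, fun _ => a, rfl, rfl, Fin.elim0⟩
  | @tail _ d _ hbd ih =>
    obtain ⟨n, c, hc0, hclast, hc⟩ := ih
    refine ⟨n + 1, Fin.snoc c d, by simpa using hc0, by simp, fun i => ?_⟩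
    induction i using Fin.lastCases with
    | last => simpa [hclast] using hbd
    | cast j => simpa only [Fin.succ_castSucc, Fin.snoc_castSucc] using hc j

def Linked (S : Set G) (Ps : Finset (Subgroup G)) (τ : ℝ) (A B : Set G) : Prop :=
  A ∈ cosets Ps ∧ B ∈ cosets Ps ∧ Unbounded S (nbhd S τ A ∩ nbhd S τ B)

lemma isNetwork_iff {S : Set G} {Ps : Finset (Subgroup G)} {τ : ℝ} :
    IsNetwork S Ps τ ↔ Ps.Nonempty ∧
      ∀ A ∈ cosets Ps, ∀ A' ∈ cosets Ps, Relation.ReflTransGen (Linked S Ps τ) A A' := by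
  refine and_congr_right fun _ => forall₂_congr fun A hA => forall₂_congr fun A' hA' => ?_
  constructor
  · rintro ⟨n, c, hcos, rfl, rfl, hc⟩
    exact reflTransGen_of_fin_chain c fun i => ⟨hcos _, hcos _, hc i⟩
  · intro h
    obtain ⟨n, c, hc0, hclast, hc⟩ := exists_fin_chain_of_reflTransGen h
    refine ⟨n, c, fun i => ?_, hc0, hclast, fun i => (hc i).2.2⟩
    induction i using Fin.cases with
    | zero => exact hc0 ▸ hA
    | succ j => exact (hc j).2.1

lemma linked_self {S : Finset G} {Ps : Finset (Subgroup G)} (hG : IsGroupPair S Ps) {σ : ℝ}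
    (hσ : 0 ≤ σ) {A : Set G} (hA : A ∈ cosets Ps) : Linked (S : Set G) Ps σ A A :=
  ⟨hA, hA, (unbounded_of_infinite hG.generates (infinite_of_mem_cosets hG.infinite hA)).mono
    (Set.subset_inter (subset_nbhd hσ A) (subset_nbhd hσ A))⟩

lemma Linked.of_isPairQI {S : Finset G} {T : Finset H} {Ps : Finset (Subgroup G)}
    {Qs : Finset (Subgroup H)} {L C M : ℝ≥0} {q : G → H} (hq : IsPairQI S T Ps Qs L C M q)
    (hT : Subgroup.closure (T : Set H) = ⊤) {σ : ℝ} {X Y : Set G} {U V : Set H}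
    (hXY : Linked (S : Set G) Ps σ X Y)
    (hU : U ∈ cosets Qs) (hXU : hdist (T : Set H) (q '' X) U < M)
    (hV : V ∈ cosets Qs) (hYV : hdist (T : Set H) (q '' Y) V < M) :
    Linked (T : Set H) Qs (L * σ + C + M) U V := by
  have hL : 0 < L := zero_lt_one.trans_le hq.one_le
  refine ⟨hU, hV, (hXY.2.2.image_of_lower_bound hL hq.lower).mono ?_⟩
  refine (Set.image_inter_subset q _ _).trans (Set.inter_subset_inter ?_ ?_)
  · exact image_nbhd_subset_nbhd hT hq.upper (subset_nbhd_of_hdist_lt hXU)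
  · exact image_nbhd_subset_nbhd hT hq.upper (subset_nbhd_of_hdist_lt hYV)

theorem statement19_general (S : Finset G) (T : Finset H)
    (Ps : Finset (Subgroup G)) (Qs : Finset (Subgroup H))
    (hG : IsGroupPair S Ps) (hH : IsGroupPair T Qs)
    (hQs : Qs.Nonempty)
    (L C M : ℝ≥0) (q : G → H) (hq : IsPairQI S T Ps Qs L C M q)
    (σ : ℝ) (hσ : 0 ≤ σ) (hnet : IsNetwork (S : Set G) Ps σ) :
    ∃ τ : ℝ, 0 ≤ τ ∧ IsNetwork (T : Set H) Qs τ := by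
  refine ⟨L * σ + C + M, by positivity, isNetwork_iff.2 ⟨hQs, fun B hB B' hB' => ?_⟩⟩
  obtain ⟨A, hA, hAB⟩ := hq.coset_bwd B hB
  obtain ⟨A', hA', hA'B'⟩ := hq.coset_bwd B' hB'
  have hAA' : Relation.TransGen (Linked (S : Set G) Ps σ) A A' :=
    .head' (linked_self hG hσ hA) ((isNetwork_iff.1 hnet).2 A hA A' hA')
  exact (hAA'.lift_along (c := fun X U => U ∈ cosets Qs ∧ hdist (T : Set H) (q '' X) U < M)
    (fun X _ hXY => hq.coset_fwd X hXY.1)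
    (fun _ _ _ _ hXY hU hV => hXY.of_isPairQI hq hH.generates hU.1 hU.2 hV.1 hV.2)
    ⟨hB, hAB⟩ ⟨hB', hA'B'⟩).to_reflTransGen

/-- Being a network is a quasi-isometry invariant of group pairs: if
`q : (G,𝒫) → (H,𝒬)` is a quasi-isometry of group pairs with `𝒫, 𝒬` non-empty and `(G,𝒫)`
is a `σ`-network, then `(H,𝒬)` is a `τ`-network for some `τ ≥ 0`. -/
theorem statement19 (S : Finset G) (T : Finset H)
    (Ps : Finset (Subgroup G)) (Qs : Finset (Subgroup H))
    (hG : IsGroupPair S Ps) (hH : IsGroupPair T Qs)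
    (hPs : Ps.Nonempty) (hQs : Qs.Nonempty)
    (L C M : ℝ≥0) (q : G → H) (hq : IsPairQI S T Ps Qs L C M q)
    (σ : ℝ) (hσ : 0 ≤ σ) (hnet : IsNetwork (S : Set G) Ps σ) :
    ∃ τ : ℝ, 0 ≤ τ ∧ IsNetwork (T : Set H) Qs τ :=
  statement19_general S T Ps Qs hG hH hQs L C M q hq σ hσ hnet

end CIC
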